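/- arXiv:1602.05676 — 2 statements merged into one kernel-verified Lean document; each statement's English description precedes it below -/
import Mathlib

section
/- Fix a non-negative integer d. There exist a positive integer m, positive reals C_1,…,C_m, and reals t_1,…,t_m with 0 < t_l ≤ 1, such that for all ε > 0, all δ > 0, every polynomial p ∈ ℂ[x] of degree at most d whose maximal coefficient absolute value is at least δ, and every positive integer k, the Lebesgue measure of { x ∈ U_k : |p(x)| < ε } is bounded above by k^d · Σ_{l=1}^m C_l · (δ^{-1}ε)^{t_l}, where U_k = [-k/2, -(k-1)/2] ∪ [(k-1)/2, k/2]. -/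
open MeasureTheory

/-- The closed subset `U_k = [-k/2, -(k-1)/2] ∪ [(k-1)/2, k/2]` of `ℝ`. -/
def Uset (k : ℕ) : Set ℝ :=
  Set.Icc (-(k : ℝ) / 2) (-((k : ℝ) - 1) / 2) ∪ Set.Icc (((k : ℝ) - 1) / 2) ((k : ℝ) / 2)

/-!
Write `p = a ∏ (X - r)` and call a root `r` near if `‖r‖ < k`. For `x ∈ U_k` we have
`|x| ≤ k/2`, so every far root satisfies `‖x - r‖ ≥ ‖r‖/2`; comparing root by root with the
Mahler measure `M(p) = ‖a‖ ∏ max 1 ‖r‖` gives `M(p) ∏_near ‖x - r‖ ≤ (2k)^d ‖p(x)‖`, and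
`δ ≤ ‖p_i‖ ≤ 2^d M(p)`. Hence on the sublevel set `{|p| < ε}` the product over the `s ≤ d` near
roots is below `η = (4k)^d δ⁻¹ε`, which forces `x` within `η^(1/s)` of the real part of a near
root. This covers the set by `s` intervals of length `2 η^(1/s) ≤ 2 (4k)^d (δ⁻¹ε)^(1/s)`;
if `s = 0`, the set is empty unless `η > 1`, and `U_k` has measure `1`.
-/

theorem Multiset.prod_map_filter {α M : Type*} [CommMonoid M] (s : Multiset α) (p : α → Prop)
    [DecidablePred p] (f : α → M) :
    ((s.filter p).map f).prod = (s.map fun a => if p a then f a else 1).prod := by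
  induction s using Multiset.induction_on with
  | empty => simp
  | cons a s ih => by_cases h : p a <;> simp [h, ih]

theorem norm_multiset_prod_map {ι 𝕜 : Type*} [NormedField 𝕜] (s : Multiset ι) (f : ι → 𝕜) :
    ‖(s.map f).prod‖ = (s.map (‖f ·‖)).prod := by
  simpa [Multiset.map_map] using map_multiset_prod (normHom : 𝕜 →*₀ ℝ) (s.map f)

theorem max_one_norm_mul_ite_le {K : ℝ} (hK : 1 ≤ K) {z r : ℂ} (hz : 2 * ‖z‖ ≤ K) :
    max 1 ‖r‖ * (if ‖r‖ < K then ‖z - r‖ else 1) ≤ 2 * K * ‖z - r‖ := by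
  have hzr : ‖r‖ - ‖z‖ ≤ ‖z - r‖ := by
    rw [norm_sub_rev]
    exact norm_sub_norm_le r z
  split_ifs with hr
  · exact mul_le_mul_of_nonneg_right (max_le (by linarith) (by linarith)) (norm_nonneg _)
  · rw [max_eq_right (by linarith), mul_one]
    nlinarith

namespace Polynomial

theorem mahlerMeasure_mul_prod_filter_le (p : ℂ[X]) {K : ℝ} (hK : 1 ≤ K) {z : ℂ}
    (hz : 2 * ‖z‖ ≤ K) :
    p.mahlerMeasure * ((p.roots.filter (‖·‖ < K)).map (‖z - ·‖)).prod ≤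
      (2 * K) ^ p.natDegree * ‖p.eval z‖ := by
  have hroots : (p.roots.map fun r => max 1 ‖r‖).prod *
      (p.roots.map fun r => if ‖r‖ < K then ‖z - r‖ else 1).prod ≤
      (p.roots.map fun r => 2 * K * ‖z - r‖).prod := by
    rw [← Multiset.prod_map_mul]
    exact Multiset.prod_map_le_prod_map₀ _ _ (fun r _ => by positivity)
      fun r _ => max_one_norm_mul_ite_le hK hz
  rw [mahlerMeasure_eq_leadingCoeff_mul_prod_roots, (IsAlgClosed.splits p).eval_eq_prod_roots,
    norm_mul, Multiset.prod_map_filter, ← IsAlgClosed.card_roots_eq_natDegree,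
    norm_multiset_prod_map]
  calc _ = ‖p.leadingCoeff‖ * ((p.roots.map fun r => max 1 ‖r‖).prod *
        (p.roots.map fun r => if ‖r‖ < K then ‖z - r‖ else 1).prod) := by ring
    _ ≤ ‖p.leadingCoeff‖ * (p.roots.map fun r => 2 * K * ‖z - r‖).prod := by gcongr
    _ = _ := by
      rw [Multiset.prod_map_mul, Multiset.map_const', Multiset.prod_replicate]
      ring

theorem norm_coeff_le_two_pow_mul_mahlerMeasure (p : ℂ[X]) (n : ℕ) :
    ‖p.coeff n‖ ≤ 2 ^ p.natDegree * p.mahlerMeasure :=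
  (norm_coeff_le_choose_mul_mahlerMeasure n p).trans <| by
    gcongr
    · exact mahlerMeasure_nonneg p
    · exact_mod_cast Nat.choose_le_two_pow _ _

theorem mul_prod_filter_lt_of_norm_eval_lt (p : ℂ[X]) {K δ ε : ℝ} (hK : 1 ≤ K) (n : ℕ)
    (hn : δ ≤ ‖p.coeff n‖) {z : ℂ} (hz : 2 * ‖z‖ ≤ K) (hpz : ‖p.eval z‖ < ε) :
    δ * ((p.roots.filter (‖·‖ < K)).map (‖z - ·‖)).prod < (4 * K) ^ p.natDegree * ε := by
  calc δ * ((p.roots.filter (‖·‖ < K)).map (‖z - ·‖)).prod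
      ≤ 2 ^ p.natDegree * (p.mahlerMeasure *
          ((p.roots.filter (‖·‖ < K)).map (‖z - ·‖)).prod) := by
        rw [← mul_assoc]
        exact mul_le_mul_of_nonneg_right (hn.trans (norm_coeff_le_two_pow_mul_mahlerMeasure p n))
          (Multiset.prod_map_nonneg fun _ _ => norm_nonneg _)
    _ ≤ 2 ^ p.natDegree * ((2 * K) ^ p.natDegree * ‖p.eval z‖) :=
        mul_le_mul_of_nonneg_left (mahlerMeasure_mul_prod_filter_le p hK hz) (by positivity)
    _ < (4 * K) ^ p.natDegree * ε := by
        rw [← mul_assoc, ← mul_pow, ← mul_assoc]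
        norm_num
        gcongr

end Polynomial

theorem volume_setOf_prod_norm_sub_lt_le (s : Multiset ℂ) (hs : s ≠ 0) (η : ℝ) :
    volume {x : ℝ | (s.map (‖(x : ℂ) - ·‖)).prod < η} ≤
      ENNReal.ofReal (2 * Multiset.card s * η ^ (Multiset.card s : ℝ)⁻¹) := by
  rcases le_or_gt η 0 with hη | hη
  · have hempty : {x : ℝ | (s.map (‖(x : ℂ) - ·‖)).prod < η} = ∅ :=
      Set.eq_empty_of_forall_notMem fun x hx =>
        hx.not_ge (hη.trans (Multiset.prod_map_nonneg fun _ _ => norm_nonneg _))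
    simp [hempty]
  set ρ := η ^ (Multiset.card s : ℝ)⁻¹
  have hcard : Multiset.card s ≠ 0 := by simpa using hs
  have hcover : {x : ℝ | (s.map (‖(x : ℂ) - ·‖)).prod < η} ⊆
      ⋃ r ∈ s.toFinset, Metric.closedBall r.re ρ := by
    intro x (hx : (s.map (‖(x : ℂ) - ·‖)).prod < η)
    by_contra hfar
    simp only [Set.mem_iUnion, Multiset.mem_toFinset, Metric.mem_closedBall, not_exists,
      not_le] at hfar
    refine hx.not_ge ?_
    calc η = (s.map fun _ => ρ).prod := by
          rw [Multiset.map_const', Multiset.prod_replicate, Real.rpow_inv_natCast_pow hη.le hcard]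
      _ ≤ _ := Multiset.prod_map_le_prod_map₀ _ _ (fun _ _ => by positivity) fun r hr =>
          (hfar r hr).le.trans (by simpa [Real.dist_eq] using Complex.abs_re_le_norm ((x : ℂ) - r))
  calc volume {x : ℝ | (s.map (‖(x : ℂ) - ·‖)).prod < η}
      ≤ ∑ r ∈ s.toFinset, volume (Metric.closedBall r.re ρ) :=
        (measure_mono hcover).trans (measure_biUnion_finset_le _ _)
    _ = s.toFinset.card * ENNReal.ofReal (2 * ρ) := by simp [Real.volume_closedBall]
    _ ≤ Multiset.card s * ENNReal.ofReal (2 * ρ) := by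
        gcongr
        exact_mod_cast Multiset.toFinset_card_le s
    _ = ENNReal.ofReal (2 * Multiset.card s * ρ) := by
        rw [← ENNReal.ofReal_natCast, ← ENNReal.ofReal_mul (by positivity)]
        ring_nf

theorem two_mul_abs_le_of_mem_Uset {k : ℕ} (hk : 0 < k) {x : ℝ} (hx : x ∈ Uset k) :
    2 * |x| ≤ k := by
  have hk1 : (1 : ℝ) ≤ k := by exact_mod_cast hk
  rcases hx with ⟨h1, h2⟩ | ⟨h1, h2⟩ <;> cases abs_cases x <;> linarith

theorem volume_Uset_le_one (k : ℕ) : volume (Uset k) ≤ 1 := by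
  refine (measure_union_le _ _).trans ?_
  rw [Real.volume_Icc, Real.volume_Icc, ← ENNReal.ofReal_add (by linarith) (by linarith),
    ← ENNReal.ofReal_one]
  exact ENNReal.ofReal_le_ofReal (by linarith)

theorem measure_inter_setOf_one_lt_le {α : Type*} [MeasurableSpace α] {μ : Measure α}
    {U : Set α} (hU : μ U ≤ 1) (η : ℝ) : μ (U ∩ {_x | 1 < η}) ≤ ENNReal.ofReal η := by
  by_cases h : 1 < η
  · simpa [h] using hU.trans (ENNReal.one_le_ofReal.mpr h.le)
  · simp [h]

theorem volume_Uset_inter_setOf_prod_lt_le {d k : ℕ} (hk : 0 < k) (s : Multiset ℂ)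
    (hs : Multiset.card s ≤ d) {τ : ℝ} (hτ : 0 ≤ τ) :
    volume (Uset k ∩ {x : ℝ | (s.map (‖(x : ℂ) - ·‖)).prod < 4 ^ d * (k : ℝ) ^ d * τ}) ≤
      ENNReal.ofReal ((k : ℝ) ^ d *
        ∑ l : Fin (d + 1), (2 * d + 1) * 4 ^ d * τ ^ (1 / ((l : ℕ) + 1 : ℝ))) := by
  have hk1 : (1 : ℝ) ≤ k := by exact_mod_cast hk
  have h4k : 1 ≤ (4 : ℝ) ^ d * (k : ℝ) ^ d :=
    one_le_mul_of_one_le_of_one_le (one_le_pow₀ (by norm_num)) (one_le_pow₀ hk1)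
  suffices ∃ l : Fin (d + 1), volume (Uset k ∩
      {x : ℝ | (s.map (‖(x : ℂ) - ·‖)).prod < 4 ^ d * (k : ℝ) ^ d * τ}) ≤
        ENNReal.ofReal ((k : ℝ) ^ d * ((2 * d + 1) * 4 ^ d * τ ^ (1 / ((l : ℕ) + 1 : ℝ)))) by
    obtain ⟨l, hl⟩ := this
    refine hl.trans (ENNReal.ofReal_le_ofReal (mul_le_mul_of_nonneg_left ?_ (by positivity)))
    exact Finset.single_le_sum (f := fun j : Fin (d + 1) =>
      (2 * d + 1) * 4 ^ d * τ ^ (1 / ((j : ℕ) + 1 : ℝ))) (fun j _ => by positivity)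
      (Finset.mem_univ l)
  rcases eq_or_ne s 0 with rfl | hs0
  · refine ⟨0, ?_⟩
    simp only [Multiset.map_zero, Multiset.prod_zero, Fin.val_zero, Nat.cast_zero, zero_add,
      div_one, Real.rpow_one]
    refine (measure_inter_setOf_one_lt_le (volume_Uset_le_one k) _).trans
      (ENNReal.ofReal_le_ofReal ?_)
    nlinarith [mul_nonneg (mul_nonneg (pow_nonneg (Nat.cast_nonneg k) d)
        (pow_nonneg zero_le_four d)) hτ, (Nat.cast_nonneg d : (0 : ℝ) ≤ d)]
  · have hs1 : 1 ≤ Multiset.card s := Multiset.card_pos.mpr hs0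
    refine ⟨⟨Multiset.card s - 1, by omega⟩, ?_⟩
    have hexp : ((Multiset.card s - 1 : ℕ) + 1 : ℝ) = Multiset.card s := by
      rw [Nat.cast_sub hs1]
      ring
    rw [Fin.val_mk, hexp, one_div]
    refine (measure_mono Set.inter_subset_right).trans
      ((volume_setOf_prod_norm_sub_lt_le s hs0 _).trans (ENNReal.ofReal_le_ofReal ?_))
    have hroot : (4 ^ d * (k : ℝ) ^ d) ^ (Multiset.card s : ℝ)⁻¹ ≤ 4 ^ d * (k : ℝ) ^ d :=
      Real.rpow_le_self_of_one_le h4k (inv_le_one_of_one_le₀ (by exact_mod_cast hs1))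
    have hcard : 2 * (Multiset.card s : ℝ) ≤ 2 * d + 1 := by
      have : (Multiset.card s : ℝ) ≤ d := by exact_mod_cast hs
      linarith
    rw [Real.mul_rpow (by positivity) hτ]
    calc 2 * (Multiset.card s : ℝ) *
          ((4 ^ d * (k : ℝ) ^ d) ^ (Multiset.card s : ℝ)⁻¹ * τ ^ (Multiset.card s : ℝ)⁻¹)
        ≤ (2 * d + 1) * ((4 ^ d * (k : ℝ) ^ d) * τ ^ (Multiset.card s : ℝ)⁻¹) := by
          gcongr
      _ = _ := by ring

/-- Fix `d ≥ 0`.  There exist `m ≥ 1`, positive constants `C_1,…,C_m` and exponents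
`0 < t_l ≤ 1` such that for all `ε, δ > 0`, every `p ∈ ℂ[x]` of degree `≤ d` with some
coefficient of absolute value `≥ δ`, and every `k ≥ 1`, the Lebesgue measure of
`{x ∈ U_k : |p(x)| < ε}` is at most `k^d · Σ_l C_l · (δ⁻¹ε)^{t_l}`. -/
theorem statement1 (d : ℕ) :
    ∃ (m : ℕ) (C t : Fin m → ℝ), 0 < m ∧ (∀ l, 0 < C l) ∧ (∀ l, 0 < t l ∧ t l ≤ 1) ∧
      ∀ (ε δ : ℝ), 0 < ε → 0 < δ →
        ∀ p : Polynomial ℂ, p.natDegree ≤ d → (∃ i, δ ≤ ‖p.coeff i‖) →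
          ∀ k : ℕ, 0 < k →
            volume {x : ℝ | x ∈ Uset k ∧ ‖p.eval (x : ℂ)‖ < ε} ≤
              ENNReal.ofReal ((k : ℝ) ^ d * ∑ l, C l * (δ⁻¹ * ε) ^ (t l)) := by
  refine ⟨d + 1, fun _ => (2 * d + 1) * 4 ^ d, fun l => 1 / ((l : ℕ) + 1 : ℝ), d.succ_pos,
    fun _ => by positivity, fun l => ⟨by positivity, div_le_one_of_le₀ (by simp) (by positivity)⟩,
    ?_⟩
  intro ε δ hε hδ p hdeg ⟨i, hi⟩ k hk
  set S := p.roots.filter (‖·‖ < (k : ℝ))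
  have hS : Multiset.card S ≤ d :=
    (Multiset.card_le_card (Multiset.filter_le _ _)).trans
      (IsAlgClosed.card_roots_eq_natDegree.trans_le hdeg)
  refine (measure_mono ?_).trans (volume_Uset_inter_setOf_prod_lt_le hk S hS (by positivity))
  rintro x ⟨hxU, hpx⟩
  refine ⟨hxU, ?_⟩
  have hx : 2 * ‖(x : ℂ)‖ ≤ k := by
    simpa using two_mul_abs_le_of_mem_Uset hk hxU
  have hlt := p.mul_prod_filter_lt_of_norm_eval_lt (by exact_mod_cast hk) i hi hx hpx
  have hpow : (4 * (k : ℝ)) ^ p.natDegree ≤ 4 ^ d * (k : ℝ) ^ d := by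
    rw [← mul_pow]
    exact pow_le_pow_right₀ (by linarith [(by exact_mod_cast hk : (1 : ℝ) ≤ k)]) hdeg
  calc (S.map (‖(x : ℂ) - ·‖)).prod = δ⁻¹ * (δ * (S.map (‖(x : ℂ) - ·‖)).prod) := by
        field_simp
    _ < δ⁻¹ * ((4 * (k : ℝ)) ^ p.natDegree * ε) := by gcongr
    _ ≤ δ⁻¹ * (4 ^ d * (k : ℝ) ^ d * ε) := by gcongr
    _ = 4 ^ d * (k : ℝ) ^ d * (δ⁻¹ * ε) := by ring
end

section
/- Every element of the principal congruence subgroup Γ_n(N) of Sp(n,ℤ) with N > 2 is neat: if a is an eigenvalue of γ ∈ Γ_n(N) (viewing γ as a complex matrix) and a is a root of unity, then a = 1. In particular, if some power γ^l of γ ∈ Γ_n(N) is unipotent, then γ itself is unipotent. -/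
/-!
Write `γ = 1 + N B` with `B` an integer matrix. An eigenvalue `a` of `γ` is `1 + N β` with `β` an
eigenvalue of `B`, hence an algebraic integer. If `a` is a root of unity, so is `1 + N μ` for every
conjugate `μ` of `β`, whence `|μ| ≤ 2 / N < 1`. The norm of `β`, the product of its conjugates, is
then an integer of absolute value `< 1`, so `β = 0` and `a = 1`. Unipotence of `γ ^ l` makes every
eigenvalue of `γ` an `l`-th root of unity.
-/

open Matrix Polynomial

theorem Multiset.norm_prod_lt_one {K : Type*} [NormedField K] {s : Multiset K} (hs : s ≠ 0)
    (h : ∀ x ∈ s, ‖x‖ < 1) : ‖s.prod‖ < 1 := by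
  induction s using Multiset.induction_on with
  | empty => exact absurd rfl hs
  | cons a t ih =>
    have ha := h a (mem_cons_self a t)
    rw [prod_cons, norm_mul]
    rcases eq_or_ne t 0 with rfl | ht
    · simpa using ha
    · exact mul_lt_one_of_nonneg_of_lt_one_left (norm_nonneg a) ha
        (ih ht fun x hx ↦ h x (mem_cons_of_mem hx)).le

theorem eq_zero_of_isIntegral_of_forall_root_minpoly_norm_lt_one {β : ℂ} (hβ : IsIntegral ℤ β)
    (h : ∀ μ : ℂ, aeval μ (minpoly ℤ β) = 0 → ‖μ‖ < 1) : β = 0 := by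
  set q : ℂ[X] := (minpoly ℤ β).map (Int.castRingHom ℂ)
  have hq : q.Monic := (minpoly.monic hβ).map _
  have hsplits : q.Splits := IsAlgClosed.splits q
  have hroots : q.roots ≠ 0 := by
    rw [← Multiset.card_pos, ← hsplits.natDegree_eq_card_roots, (minpoly.monic hβ).natDegree_map]
    exact minpoly.natDegree_pos hβ
  have hcoeff : ‖((minpoly ℤ β).coeff 0 : ℂ)‖ < 1 := by
    rw [← eq_intCast (Int.castRingHom ℂ), ← coeff_map,
      hsplits.coeff_zero_eq_prod_roots_of_monic hq, norm_mul, norm_pow, norm_neg,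
      norm_one, one_pow, one_mul]
    refine Multiset.norm_prod_lt_one hroots fun μ hμ ↦ h μ ?_
    rw [aeval_def, eval₂_eq_eval_map]
    exact (mem_roots hq.ne_zero).mp hμ
  have hcoeff0 : (minpoly ℤ β).coeff 0 = 0 := by
    rw [Complex.norm_intCast] at hcoeff
    exact Int.abs_lt_one_iff.mp (by exact_mod_cast hcoeff)
  rw [← minpoly.coeff_zero_eq_zero hβ.tower_top (A := ℚ),
    minpoly.isIntegrallyClosed_eq_field_fractions' ℚ hβ, coeff_map, hcoeff0, map_zero]

theorem norm_lt_one_of_natCast_mul_add_one_pow_eq_one {N k : ℕ} (hN : 2 < N) (hk : k ≠ 0)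
    {μ : ℂ} (h : ((N : ℂ) * μ + 1) ^ k = 1) : ‖μ‖ < 1 := by
  have hN' : (2 : ℝ) < N := by exact_mod_cast hN
  have hunit : ‖(N : ℂ) * μ + 1‖ = 1 := Complex.norm_eq_one_of_pow_eq_one h hk
  have hbound : (N : ℝ) * ‖μ‖ ≤ 2 := calc
    (N : ℝ) * ‖μ‖ = ‖((N : ℂ) * μ + 1) - 1‖ := by simp
    _ ≤ ‖(N : ℂ) * μ + 1‖ + ‖(1 : ℂ)‖ := norm_sub_le _ _
    _ = 2 := by rw [hunit, norm_one]; norm_num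
  nlinarith [norm_nonneg μ]

theorem eq_zero_of_isIntegral_of_natCast_mul_add_one_pow_eq_one {N k : ℕ} (hN : 2 < N)
    (hk : k ≠ 0) {β : ℂ} (hβ : IsIntegral ℤ β) (h : ((N : ℂ) * β + 1) ^ k = 1) : β = 0 := by
  have hdvd : minpoly ℤ β ∣ ((X : ℤ[X]) ^ k - 1).comp (C (N : ℤ) * X + 1) :=
    minpoly.isIntegrallyClosed_dvd hβ (by simp [h])
  refine eq_zero_of_isIntegral_of_forall_root_minpoly_norm_lt_one hβ fun μ hμ ↦ ?_
  refine norm_lt_one_of_natCast_mul_add_one_pow_eq_one hN hk ?_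
  obtain ⟨r, hr⟩ := hdvd
  simpa [hμ, sub_eq_zero] using congrArg (aeval μ) hr

namespace Matrix

variable {ι : Type*} [Fintype ι] [DecidableEq ι]

theorem isIntegral_of_isRoot_charpoly_map {R A : Type*} [CommRing R] [CommRing A] [Algebra R A]
    (B : Matrix ι ι R) {β : A} (h : (B.map (algebraMap R A)).charpoly.IsRoot β) :
    IsIntegral R β :=
  ⟨B.charpoly, B.charpoly_monic, by rwa [← eval_map, ← charpoly_map]⟩

theorem isRoot_charpoly_one_add_smul_iff {K : Type*} [Field K] (A : Matrix ι ι K) {c : K}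
    (hc : c ≠ 0) (β : K) : (1 + c • A).charpoly.IsRoot (1 + c * β) ↔ A.charpoly.IsRoot β := by
  rw [← mem_spectrum_iff_isRoot_charpoly, ← mem_spectrum_iff_isRoot_charpoly,
    ← map_one (algebraMap K (Matrix ι ι K)), add_comm (1 : K), spectrum.add_mem_add_iff]
  exact spectrum.smul_mem_smul_iff (r := Units.mk0 c hc)

theorem isRoot_charpoly_pow {K : Type*} [Field K] {A : Matrix ι ι K} {a : K}
    (ha : A.charpoly.IsRoot a) (l : ℕ) : (A ^ l).charpoly.IsRoot (a ^ l) := by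
  rw [← mem_spectrum_iff_isRoot_charpoly] at ha ⊢
  exact spectrum.pow_mem_pow A l ha

theorem eq_one_of_isRoot_charpoly_of_pow_eq_one {N : ℕ} (hN : 2 < N) {M : Matrix ι ι ℤ}
    (hM : ∀ i j, (N : ℤ) ∣ M i j - (1 : Matrix ι ι ℤ) i j) {a : ℂ}
    (ha : (M.map ((↑) : ℤ → ℂ)).charpoly.IsRoot a) {k : ℕ} (hk : k ≠ 0) (hak : a ^ k = 1) :
    a = 1 := by
  choose B hB using hM
  have hN0 : (N : ℂ) ≠ 0 := by exact_mod_cast (by omega : N ≠ 0)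
  have hMB : M.map ((↑) : ℤ → ℂ) = 1 + (N : ℂ) • (of B).map (algebraMap ℤ ℂ) := by
    ext i j
    have := congrArg ((↑) : ℤ → ℂ) (hB i j)
    rcases eq_or_ne i j with rfl | hij <;> simp_all [one_apply, sub_eq_iff_eq_add, add_comm]
  have ha' : a = 1 + N * ((a - 1) / N) := by field_simp; ring
  rw [hMB, ha', isRoot_charpoly_one_add_smul_iff _ hN0] at ha
  have hβ := eq_zero_of_isIntegral_of_natCast_mul_add_one_pow_eq_one hN hk
    (isIntegral_of_isRoot_charpoly_map _ ha) (by rw [add_comm, ← ha', hak])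
  rw [ha', hβ, mul_zero, add_zero]

end Matrix

/-- Every element of the principal congruence subgroup `Γ_n(N)` of `Sp(n,ℤ)` with `N > 2`
is neat: any complex eigenvalue (root of the characteristic polynomial) which is a root of
unity equals `1`.  In particular, if some power `γ^l` is unipotent (all complex eigenvalues
equal to `1`), then `γ` itself is unipotent. -/
theorem statement6 (n N : ℕ) (hN : 2 < N) (γ : Matrix.symplecticGroup (Fin n) ℤ)
    (hcong : ∀ i j, (N : ℤ) ∣
      ((γ : Matrix (Fin n ⊕ Fin n) (Fin n ⊕ Fin n) ℤ) i j -
        (1 : Matrix (Fin n ⊕ Fin n) (Fin n ⊕ Fin n) ℤ) i j)) :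
    (∀ a : ℂ,
        (((γ : Matrix (Fin n ⊕ Fin n) (Fin n ⊕ Fin n) ℤ).map ((↑) : ℤ → ℂ)).charpoly.IsRoot a) →
        (∃ k : ℕ, 0 < k ∧ a ^ k = 1) → a = 1) ∧
      (∀ l : ℕ, 0 < l →
        (∀ a : ℂ,
          ((((γ : Matrix (Fin n ⊕ Fin n) (Fin n ⊕ Fin n) ℤ).map ((↑) : ℤ → ℂ)) ^ l).charpoly.IsRoot a)
            → a = 1) →
        (∀ a : ℂ,
          (((γ : Matrix (Fin n ⊕ Fin n) (Fin n ⊕ Fin n) ℤ).map ((↑) : ℤ → ℂ)).charpoly.IsRoot a)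
            → a = 1)) := by
  have neat : ∀ a : ℂ,
      (((γ : Matrix (Fin n ⊕ Fin n) (Fin n ⊕ Fin n) ℤ).map ((↑) : ℤ → ℂ)).charpoly.IsRoot a) →
      (∃ k : ℕ, 0 < k ∧ a ^ k = 1) → a = 1 := fun a ha ⟨k, hk, hak⟩ ↦
    Matrix.eq_one_of_isRoot_charpoly_of_pow_eq_one hN hcong ha hk.ne' hak
  exact ⟨neat, fun l hl hunipotent a ha ↦
    neat a ha ⟨l, hl, hunipotent _ (Matrix.isRoot_charpoly_pow ha l)⟩⟩
end
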